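/- arXiv:math/9806072 — 2 statements merged into one kernel-verified Lean document; each statement's English description precedes it below -/
import Mathlib

section
/- Let K and H be groups, φ : K → Aut(H) a homomorphism, and G = H ⋊_φ K the semidirect product. Let J_K ∈ ℂ[K] ⊗ ℂ[K] be a twist for ℂ[K], and let J_H ∈ ℂ[H] ⊗ ℂ[H] be a twist for ℂ[H] which is invariant under φ(K), i.e. (φ(k) ⊗ φ(k))(J_H) = J_H for all k ∈ K (with φ(k) extended ℂ-linearly to ℂ[H]). Regard J_K and J_H as elements of ℂ[G] ⊗ ℂ[G] via the subgroup embeddings K ↪ G and H ↪ G. Then the product J_H · J_K is a twist for ℂ[G]. (This is the inductive step of the paper's Proposition 2.4: for a twist hierarchy J₁, ..., J_n on groups G₁ = H₁, G_i = G_{i-1} ⋉ H_i, with each J_i a twist for ℂ[H_i] invariant under ρ_{i-1}(G_{i-1}), the element J̄ = J_n ⋯ J₁ is a twist for ℂ[G_n].) -/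
open TensorProduct

noncomputable section

variable (G : Type*) [Group G]

/-- Comultiplication on the group algebra `ℂ[G]`, determined by `Δ(g) = g ⊗ g`. -/
def GroupAlgebra.comul :
    MonoidAlgebra ℂ G →ₐ[ℂ] MonoidAlgebra ℂ G ⊗[ℂ] MonoidAlgebra ℂ G :=
  (MonoidAlgebra.lift ℂ _ G)
    { toFun := fun g => MonoidAlgebra.of ℂ G g ⊗ₜ[ℂ] MonoidAlgebra.of ℂ G g
      map_one' := by simp [Algebra.TensorProduct.one_def, MonoidAlgebra.one_def]
      map_mul' := fun g h => by simp [Algebra.TensorProduct.tmul_mul_tmul] }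

/-- Counit on the group algebra `ℂ[G]`, determined by `ε(g) = 1`. -/
def GroupAlgebra.counit : MonoidAlgebra ℂ G →ₐ[ℂ] ℂ :=
  (MonoidAlgebra.lift ℂ ℂ G) 1

/-- The equation `((Δ ⊗ id)(J))·(J ⊗ 1) = ((id ⊗ Δ)(J))·(1 ⊗ J)` in `ℂ[G] ⊗ ℂ[G] ⊗ ℂ[G]`. -/
def GroupAlgebra.TwistEq (J : MonoidAlgebra ℂ G ⊗[ℂ] MonoidAlgebra ℂ G) : Prop :=
  (Algebra.TensorProduct.assoc ℂ ℂ ℂ (MonoidAlgebra ℂ G) (MonoidAlgebra ℂ G) (MonoidAlgebra ℂ G))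
      ((Algebra.TensorProduct.map (GroupAlgebra.comul G) (AlgHom.id ℂ (MonoidAlgebra ℂ G))) J) *
    (Algebra.TensorProduct.assoc ℂ ℂ ℂ (MonoidAlgebra ℂ G) (MonoidAlgebra ℂ G) (MonoidAlgebra ℂ G))
      (J ⊗ₜ[ℂ] (1 : MonoidAlgebra ℂ G)) =
  (Algebra.TensorProduct.map (AlgHom.id ℂ (MonoidAlgebra ℂ G)) (GroupAlgebra.comul G)) J *
    ((1 : MonoidAlgebra ℂ G) ⊗ₜ[ℂ] J)

/-- The equations `(ε ⊗ id)(J) = 1` and `(id ⊗ ε)(J) = 1`. -/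
def GroupAlgebra.CounitEq (J : MonoidAlgebra ℂ G ⊗[ℂ] MonoidAlgebra ℂ G) : Prop :=
  (Algebra.TensorProduct.lid ℂ (MonoidAlgebra ℂ G))
      ((Algebra.TensorProduct.map (GroupAlgebra.counit G) (AlgHom.id ℂ (MonoidAlgebra ℂ G))) J) = 1 ∧
  (Algebra.TensorProduct.rid ℂ ℂ (MonoidAlgebra ℂ G))
      ((Algebra.TensorProduct.map (AlgHom.id ℂ (MonoidAlgebra ℂ G)) (GroupAlgebra.counit G)) J) = 1

/-- A twist for the group algebra `ℂ[G]`: an invertible element of `ℂ[G] ⊗ ℂ[G]` satisfying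
`((Δ ⊗ id)(J))·(J ⊗ 1) = ((id ⊗ Δ)(J))·(1 ⊗ J)` and `(ε ⊗ id)(J) = (id ⊗ ε)(J) = 1`. -/
def GroupAlgebra.IsTwist (J : MonoidAlgebra ℂ G ⊗[ℂ] MonoidAlgebra ℂ G) : Prop :=
  IsUnit J ∧ GroupAlgebra.TwistEq G J ∧ GroupAlgebra.CounitEq G J

end

/-- The `ℂ`-linear map `ℂ[A] → ℂ[G]` sending the basis element `a` to `p a`. -/
noncomputable def GroupAlgebra.transport (A G : Type*) [Group A] [Group G] (p : A → G) :
    MonoidAlgebra ℂ A →ₗ[ℂ] MonoidAlgebra ℂ G :=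
  MonoidAlgebra.mapDomainLinearMap ℂ ℂ p

/-!
Pushing forward along a group homomorphism preserves both twist axioms, so the images of `J_H`
and `J_K` are twists for `ℂ[H ⋊ K]`. A product `J₁ J₂` of twists is again a twist as soon as
`(Δ ⊗ id)(J₂)` commutes with `J₁ ⊗ 1` and `(id ⊗ Δ)(J₂)` commutes with `1 ⊗ J₁`: the two
cocycle identities can then be multiplied. Both commutations hold because conjugation by
`Δ(k) = k ⊗ k` maps the image of `J_H` to the image of `(φ(k) ⊗ φ(k))(J_H) = J_H`.
-/

namespace Algebra.TensorProduct

variable {R A B C A' B' C' : Type*} [CommSemiring R] [Semiring A] [Semiring B] [Semiring C]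
  [Semiring A'] [Semiring B'] [Semiring C'] [Algebra R A] [Algebra R B] [Algebra R C]
  [Algebra R A'] [Algebra R B'] [Algebra R C']

theorem assoc_map_map (f : A →ₐ[R] A') (g : B →ₐ[R] B') (h : C →ₐ[R] C')
    (x : (A ⊗[R] B) ⊗[R] C) :
    Algebra.TensorProduct.assoc R R R A' B' C' (map (map f g) h x) =
      map f (map g h) (Algebra.TensorProduct.assoc R R R A B C x) :=
  (TensorProduct.map_map_assoc f.toLinearMap g.toLinearMap h.toLinearMap x).symm

theorem lid_map_id (f : A →ₐ[R] A') (x : R ⊗[R] A) :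
    Algebra.TensorProduct.lid R A' (map (AlgHom.id R R) f x) =
      f (Algebra.TensorProduct.lid R A x) := by
  induction x with
  | zero => simp
  | tmul r a => simp
  | add x y hx hy => simp [hx, hy]

theorem rid_map_id (f : A →ₐ[R] A') (x : A ⊗[R] R) :
    Algebra.TensorProduct.rid R R A' (map f (AlgHom.id R R) x) =
      f (Algebra.TensorProduct.rid R R A x) := by
  induction x with
  | zero => simp
  | tmul r a => simp
  | add x y hx hy => simp [hx, hy]

theorem commute_map_tmul_one (f : A →ₐ[R] A') (g : B →ₐ[R] B') {c : A'}
    (hf : ∀ a, Commute (f a) c) (x : A ⊗[R] B) : Commute (map f g x) (c ⊗ₜ 1) := by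
  induction x with
  | zero => simp
  | tmul a b => exact (hf a).tmul (Commute.one_right _)
  | add x y hx hy => rw [map_add]; exact hx.add_left hy

theorem commute_map_one_tmul (f : A →ₐ[R] A') (g : B →ₐ[R] B') {c : B'}
    (hg : ∀ b, Commute (g b) c) (x : A ⊗[R] B) : Commute (map f g x) (1 ⊗ₜ c) := by
  induction x with
  | zero => simp
  | tmul a b => exact (Commute.one_right _).tmul (hg b)
  | add x y hx hy => rw [map_add]; exact hx.add_left hy

end Algebra.TensorProduct

namespace GroupAlgebra

open MonoidAlgebra

variable {A G : Type*} [Group A] [Group G]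

theorem comul_single (g : G) (c : ℂ) :
    comul G (single g c) = single g c ⊗ₜ[ℂ] single g 1 := by
  simp [comul, lift_single, of_apply, TensorProduct.smul_tmul']

theorem comul_comp_mapDomainAlgHom (f : A →* G) :
    (comul G).comp (mapDomainAlgHom ℂ ℂ f) =
      (Algebra.TensorProduct.map (mapDomainAlgHom ℂ ℂ f) (mapDomainAlgHom ℂ ℂ f)).comp
        (comul A) := by
  ext a
  simp [comul_single]

theorem counit_comp_mapDomainAlgHom (f : A →* G) :
    (counit G).comp (mapDomainAlgHom ℂ ℂ f) = counit A := by
  ext a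
  simp [counit]

section Map

variable (f : A →* G) {J : MonoidAlgebra ℂ A ⊗[ℂ] MonoidAlgebra ℂ A}

local notation "F" => mapDomainAlgHom ℂ ℂ f

theorem TwistEq.map (hJ : TwistEq A J) : TwistEq G (Algebra.TensorProduct.map F F J) := by
  have hl : Algebra.TensorProduct.map (comul G) (.id ℂ _) (Algebra.TensorProduct.map F F J) =
      Algebra.TensorProduct.map (Algebra.TensorProduct.map F F) F
        (Algebra.TensorProduct.map (comul A) (.id ℂ _) J) := by
    simp only [← AlgHom.comp_apply, ← Algebra.TensorProduct.map_comp,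
      comul_comp_mapDomainAlgHom, AlgHom.comp_id, AlgHom.id_comp]
  have hr : Algebra.TensorProduct.map (.id ℂ _) (comul G) (Algebra.TensorProduct.map F F J) =
      Algebra.TensorProduct.map F (Algebra.TensorProduct.map F F)
        (Algebra.TensorProduct.map (.id ℂ _) (comul A) J) := by
    simp only [← AlgHom.comp_apply, ← Algebra.TensorProduct.map_comp,
      comul_comp_mapDomainAlgHom, AlgHom.comp_id, AlgHom.id_comp]
  have h1 : Algebra.TensorProduct.map F F J ⊗ₜ[ℂ] (1 : MonoidAlgebra ℂ G) =
      Algebra.TensorProduct.map (Algebra.TensorProduct.map F F) F (J ⊗ₜ 1) := by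
    rw [Algebra.TensorProduct.map_tmul, map_one]
  have h2 : (1 : MonoidAlgebra ℂ G) ⊗ₜ[ℂ] Algebra.TensorProduct.map F F J =
      Algebra.TensorProduct.map F (Algebra.TensorProduct.map F F) (1 ⊗ₜ J) := by
    rw [Algebra.TensorProduct.map_tmul, map_one]
  unfold TwistEq at hJ ⊢
  rw [hl, hr, h1, h2, Algebra.TensorProduct.assoc_map_map, Algebra.TensorProduct.assoc_map_map,
    ← map_mul, hJ, map_mul]

theorem CounitEq.map (hJ : CounitEq A J) : CounitEq G (Algebra.TensorProduct.map F F J) := by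
  have hl : Algebra.TensorProduct.map (counit G) (.id ℂ _) (Algebra.TensorProduct.map F F J) =
      Algebra.TensorProduct.map (.id ℂ ℂ) F
        (Algebra.TensorProduct.map (counit A) (.id ℂ _) J) := by
    simp only [← AlgHom.comp_apply, ← Algebra.TensorProduct.map_comp,
      counit_comp_mapDomainAlgHom, AlgHom.comp_id, AlgHom.id_comp]
  have hr : Algebra.TensorProduct.map (.id ℂ _) (counit G) (Algebra.TensorProduct.map F F J) =
      Algebra.TensorProduct.map F (.id ℂ ℂ)
        (Algebra.TensorProduct.map (.id ℂ _) (counit A) J) := by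
    simp only [← AlgHom.comp_apply, ← Algebra.TensorProduct.map_comp,
      counit_comp_mapDomainAlgHom, AlgHom.comp_id, AlgHom.id_comp]
  exact ⟨by rw [hl, Algebra.TensorProduct.lid_map_id, hJ.1, map_one],
    by rw [hr, Algebra.TensorProduct.rid_map_id, hJ.2, map_one]⟩

theorem IsTwist.map (hJ : IsTwist A J) : IsTwist G (Algebra.TensorProduct.map F F J) :=
  ⟨hJ.1.map _, hJ.2.1.map f, hJ.2.2.map f⟩

end Map

section Mul

variable {J₁ J₂ : MonoidAlgebra ℂ G ⊗[ℂ] MonoidAlgebra ℂ G}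

theorem TwistEq.mul (h₁ : TwistEq G J₁) (h₂ : TwistEq G J₂)
    (hl : Commute (Algebra.TensorProduct.map (comul G) (.id ℂ _) J₂) (J₁ ⊗ₜ 1))
    (hr : Commute (Algebra.TensorProduct.map (.id ℂ _) (comul G) J₂) (1 ⊗ₜ J₁)) :
    TwistEq G (J₁ * J₂) := by
  unfold TwistEq at h₁ h₂ ⊢
  set α := Algebra.TensorProduct.assoc ℂ ℂ ℂ (MonoidAlgebra ℂ G) (MonoidAlgebra ℂ G)
    (MonoidAlgebra ℂ G)
  set Δl := Algebra.TensorProduct.map (comul G) (.id ℂ (MonoidAlgebra ℂ G))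
  set Δr := Algebra.TensorProduct.map (.id ℂ (MonoidAlgebra ℂ G)) (comul G)
  calc α (Δl (J₁ * J₂)) * α ((J₁ * J₂) ⊗ₜ 1)
      = α (Δl J₁ * Δl J₂ * (J₁ ⊗ₜ 1 * J₂ ⊗ₜ 1)) := by
        rw [map_mul Δl, ← map_mul α, Algebra.TensorProduct.tmul_mul_tmul, one_mul]
    _ = α (Δl J₁) * α (J₁ ⊗ₜ 1) * (α (Δl J₂) * α (J₂ ⊗ₜ 1)) := by
        rw [hl.mul_mul_mul_comm, map_mul, map_mul, map_mul]
    _ = Δr J₁ * (1 ⊗ₜ J₁) * (Δr J₂ * (1 ⊗ₜ J₂)) := by rw [h₁, h₂]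
    _ = Δr (J₁ * J₂) * (1 ⊗ₜ (J₁ * J₂)) := by
        rw [hr.symm.mul_mul_mul_comm, map_mul Δr, Algebra.TensorProduct.tmul_mul_tmul, one_mul]

theorem CounitEq.mul (h₁ : CounitEq G J₁) (h₂ : CounitEq G J₂) : CounitEq G (J₁ * J₂) :=
  ⟨by rw [map_mul, map_mul, h₁.1, h₂.1, one_mul],
    by rw [map_mul, map_mul, h₁.2, h₂.2, one_mul]⟩

theorem IsTwist.mul (h₁ : IsTwist G J₁) (h₂ : IsTwist G J₂)
    (hl : Commute (Algebra.TensorProduct.map (comul G) (.id ℂ _) J₂) (J₁ ⊗ₜ 1))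
    (hr : Commute (Algebra.TensorProduct.map (.id ℂ _) (comul G) J₂) (1 ⊗ₜ J₁)) :
    IsTwist G (J₁ * J₂) :=
  ⟨h₁.1.mul h₂.1, h₁.2.1.mul h₂.2.1 hl hr, h₁.2.2.mul h₂.2.2⟩

end Mul

section Semidirect

variable {K H : Type*} [Group K] [Group H] (φ : K →* MulAut H)

local notation "ιH" => mapDomainAlgHom ℂ ℂ (SemidirectProduct.inl : H →* H ⋊[φ] K)
local notation "ιK" => mapDomainAlgHom ℂ ℂ (SemidirectProduct.inr : K →* H ⋊[φ] K)

theorem single_inr_mul_mapDomain_inl (k : K) (a : MonoidAlgebra ℂ H) :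
    single (SemidirectProduct.inr k) 1 * ιH a =
      ιH (transport H H (φ k) a) * single (SemidirectProduct.inr k) 1 := by
  induction a using MonoidAlgebra.induction_linear with
  | zero => simp
  | add a b ha hb => rw [map_add, map_add, map_add, add_mul, mul_add, ha, hb]
  | single h c =>
    simp only [transport, mapDomainLinearMap_single, mapDomain_single, mapDomainAlgHom_apply,
      single_mul_single, one_mul, mul_one, SemidirectProduct.inl_aut, map_inv,
      inv_mul_cancel_right]

theorem single_inr_tmul_mul_map_inl (k : K) (y : MonoidAlgebra ℂ H ⊗[ℂ] MonoidAlgebra ℂ H) :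
    single (SemidirectProduct.inr k) 1 ⊗ₜ single (SemidirectProduct.inr k) 1 *
        Algebra.TensorProduct.map ιH ιH y =
      Algebra.TensorProduct.map ιH ιH
          (TensorProduct.map (transport H H (φ k)) (transport H H (φ k)) y) *
        single (SemidirectProduct.inr k) 1 ⊗ₜ single (SemidirectProduct.inr k) 1 := by
  induction y with
  | zero => simp
  | add y z hy hz => rw [map_add, map_add, map_add, mul_add, add_mul, hy, hz]
  | tmul a b =>
    rw [TensorProduct.map_tmul, Algebra.TensorProduct.map_tmul, Algebra.TensorProduct.map_tmul,
      Algebra.TensorProduct.tmul_mul_tmul, Algebra.TensorProduct.tmul_mul_tmul,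
      single_inr_mul_mapDomain_inl, single_inr_mul_mapDomain_inl]

theorem commute_comul_mapDomain_inr {J : MonoidAlgebra ℂ H ⊗[ℂ] MonoidAlgebra ℂ H}
    (hJ : ∀ k : K, TensorProduct.map (transport H H (φ k)) (transport H H (φ k)) J = J)
    (a : MonoidAlgebra ℂ K) :
    Commute (comul _ (ιK a)) (Algebra.TensorProduct.map ιH ιH J) := by
  induction a using MonoidAlgebra.induction_linear with
  | zero => simp
  | add a b ha hb => rw [map_add, map_add]; exact ha.add_left hb
  | single k c =>
    have hk : Commute (single (SemidirectProduct.inr k : H ⋊[φ] K) 1 ⊗ₜ[ℂ]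
        single (SemidirectProduct.inr k) 1) (Algebra.TensorProduct.map ιH ιH J) := by
      unfold Commute SemiconjBy
      rw [single_inr_tmul_mul_map_inl, hJ]
    rw [mapDomainAlgHom_apply, mapDomain_single, comul_single, ← mul_one c, ← smul_eq_mul,
      ← smul_single, ← TensorProduct.smul_tmul']
    exact hk.smul_left c

end Semidirect

end GroupAlgebra

/-- **Proposition 2.4 (inductive step).** Let `K, H` be groups, `φ : K → Aut(H)` a homomorphism,
and `G = H ⋊_φ K`.  Let `J_K` be a twist for `ℂ[K]` and `J_H` a twist for `ℂ[H]` invariant under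
`φ(K)`.  Regarding `J_K` and `J_H` as elements of `ℂ[G] ⊗ ℂ[G]` via the subgroup embeddings,
the product `J_H · J_K` is a twist for `ℂ[G]`. -/
theorem twist_product_semidirect
    (K H : Type*) [Group K] [Group H] (φ : K →* MulAut H)
    (JK : MonoidAlgebra ℂ K ⊗[ℂ] MonoidAlgebra ℂ K)
    (JH : MonoidAlgebra ℂ H ⊗[ℂ] MonoidAlgebra ℂ H)
    (hJK : GroupAlgebra.IsTwist K JK) (hJH : GroupAlgebra.IsTwist H JH)
    (hinv : ∀ k : K,
      TensorProduct.map (GroupAlgebra.transport H H ⇑(φ k)) (GroupAlgebra.transport H H ⇑(φ k)) JH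
        = JH) :
    GroupAlgebra.IsTwist (H ⋊[φ] K)
      ((Algebra.TensorProduct.map
            (MonoidAlgebra.mapDomainAlgHom ℂ ℂ (SemidirectProduct.inl : H →* H ⋊[φ] K))
            (MonoidAlgebra.mapDomainAlgHom ℂ ℂ (SemidirectProduct.inl : H →* H ⋊[φ] K)) JH) *
        (Algebra.TensorProduct.map
            (MonoidAlgebra.mapDomainAlgHom ℂ ℂ (SemidirectProduct.inr : K →* H ⋊[φ] K))
            (MonoidAlgebra.mapDomainAlgHom ℂ ℂ (SemidirectProduct.inr : K →* H ⋊[φ] K)) JK)) := by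
  have hcomm := GroupAlgebra.commute_comul_mapDomain_inr φ hinv
  refine (hJH.map _).mul (hJK.map _) ?_ ?_ <;>
    rw [← AlgHom.comp_apply, ← Algebra.TensorProduct.map_comp, AlgHom.id_comp]
  · exact Algebra.TensorProduct.commute_map_tmul_one _ _ hcomm JK
  · exact Algebra.TensorProduct.commute_map_one_tmul _ _ hcomm JK
end

section
/- Let A be a finite abelian group with character group A* = Hom(A, ℂˣ), and let Ã = A × A*. Let G be a group, ρ : G → Aut(A) a homomorphism, and let G̃ = G ⋉ A* act on Ã by (χ, g)·(a, ψ) = (ρ(g)(a), ψ ∘ ρ(g)⁻¹). Then the element J = |A|⁻¹ Σ_{x ∈ A, χ ∈ A*} χ(x) · (x, 1) ⊗ (1, χ) ∈ ℂ[Ã] ⊗ ℂ[Ã] is a twist for ℂ[Ã] (in particular invertible, with J⁻¹ = |A|⁻¹ Σ_{x,χ} χ(x)⁻¹ (x,1) ⊗ (1,χ)), and J is invariant under the action of G̃: applying the linear extension of the action of any element of G̃ to both tensor factors of J returns J. -/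
open TensorProduct

/-- The statement `u · v = 1` in the algebra `ℂ[G] ⊗ ℂ[G]`. -/
noncomputable def GroupAlgebra.MulEqOne (G : Type*) [Group G]
    (u v : MonoidAlgebra ℂ G ⊗[ℂ] MonoidAlgebra ℂ G) : Prop := u * v = 1

/-- The statement `u · v = w` in the algebra `ℂ[G] ⊗ ℂ[G]`. -/
noncomputable def GroupAlgebra.MulEq (G : Type*) [Group G]
    (u v w : MonoidAlgebra ℂ G ⊗[ℂ] MonoidAlgebra ℂ G) : Prop := u * v = w

/-- The element `J = |A|⁻¹ Σ_{x ∈ A, χ ∈ A*} χ(x)^s (x,1) ⊗ (1,χ)` of `ℂ[Ã] ⊗ ℂ[Ã]`, where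
`Ã = A × A*` and `A* = Hom(A, ℂˣ)`; `s = 1` gives the twist `J` of Section 4 and `s = -1`
gives its inverse. -/
noncomputable def GroupAlgebra.fourierTwist (A : Type*) [CommGroup A] [Fintype A]
    [Fintype (A →* ℂˣ)] (s : ℤ) :
    MonoidAlgebra ℂ (A × (A →* ℂˣ)) ⊗[ℂ] MonoidAlgebra ℂ (A × (A →* ℂˣ)) :=
  (Fintype.card A : ℂ)⁻¹ •
    ∑ x : A, ∑ χ : A →* ℂˣ,
      (((χ x ^ s : ℂˣ) : ℂ)) •
        (MonoidAlgebra.of ℂ (A × (A →* ℂˣ)) (x, 1) ⊗ₜ[ℂ]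
          MonoidAlgebra.of ℂ (A × (A →* ℂˣ)) (1, χ))


/-! Put `E(x, χ) = (x,1) ⊗ (1,χ)`; it is multiplicative in `(x, χ)`, so products of the sums
defining `J` and `J⁻¹` are convolutions, and after the substitution `(x, χ) ↦ (x, χ)⁻¹ (z, ψ)` the
coefficient of `E(z, ψ)` in `J J⁻¹` is `|A|⁻² ψ(z)⁻¹ (Σ_x ψ(x)) (Σ_χ χ(z))`. The orthogonality
relations `Σ_x χ(x) = |A| δ_{χ,1}` and `Σ_χ χ(x) = |A| δ_{x,1}` then give `J J⁻¹ = 1` and the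
counit identities. Both sides of the twist equation are sums of `χ(x) ψ(y)` times a basis tensor,
and a change of variables matches them term by term, using only that `χ(x)` is
bimultiplicative. Invariance is `(ψ ∘ σ⁻¹)(σ a) = ψ(a)`. -/

namespace GroupAlgebra

open Finset TensorProduct

lemma comul_of {G : Type*} [Group G] (g : G) :
    comul G (MonoidAlgebra.of ℂ G g) = MonoidAlgebra.of ℂ G g ⊗ₜ MonoidAlgebra.of ℂ G g :=
  MonoidAlgebra.lift_of _ _

lemma counit_of {G : Type*} [Group G] (g : G) : counit G (MonoidAlgebra.of ℂ G g) = 1 :=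
  MonoidAlgebra.lift_of _ _

lemma transport_of {M N : Type*} [Group M] [Group N] (f : M → N) (m : M) :
    transport M N f (MonoidAlgebra.of ℂ M m) = MonoidAlgebra.of ℂ N (f m) :=
  MonoidAlgebra.mapDomainLinearMap_single _ _ _

@[simps]
noncomputable def tmulInlInr (M N : Type*) [Monoid M] [Monoid N] :
    M × N →* MonoidAlgebra ℂ (M × N) ⊗[ℂ] MonoidAlgebra ℂ (M × N) where
  toFun p := MonoidAlgebra.of ℂ _ (p.1, 1) ⊗ₜ MonoidAlgebra.of ℂ _ (1, p.2)
  map_one' := by simp only [Prod.fst_one, Prod.snd_one, Prod.mk_one_one, map_one]; rfl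
  map_mul' p q := by simp [Algebra.TensorProduct.tmul_mul_tmul]

variable {A : Type*} [CommGroup A] [Fintype A]

lemma sum_apply_eq_zero_of_ne_one {χ : A →* ℂˣ} (hχ : χ ≠ 1) : ∑ a, (χ a : ℂ) = 0 :=
  sum_hom_units_eq_zero ((Units.coeHom ℂ).comp χ)
    fun h => hχ <| MonoidHom.ext fun a => Units.ext <| DFunLike.congr_fun h a

variable [Fintype (A →* ℂˣ)]

lemma sum_eval_eq_zero_of_ne_one {a : A} (ha : a ≠ 1) : ∑ χ : A →* ℂˣ, (χ a : ℂ) = 0 := by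
  obtain ⟨χ, hχ⟩ := CommGroup.exists_apply_ne_one_of_hasEnoughRootsOfUnity A ℂ ha
  exact sum_hom_units_eq_zero ((Units.coeHom ℂ).comp (MonoidHom.eval a))
    fun h => hχ <| Units.ext <| DFunLike.congr_fun h χ

lemma card_dual : Fintype.card (A →* ℂˣ) = Fintype.card A := by
  simpa only [Nat.card_eq_fintype_card] using
    CommGroup.card_monoidHom_of_hasEnoughRootsOfUnity A ℂ

-- Without this shortcut, instance search for the ring `ℂ[A × A*] ⊗ ℂ[A × A*]` exceeds the
-- default `maxSynthPendingDepth`.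
abbrev commGroupDual : CommGroup (A →* ℂˣ) := inferInstance

attribute [local instance] commGroupDual

lemma fourierTwist_eq_sum (s : ℤ) :
    fourierTwist A s = (Fintype.card A : ℂ)⁻¹ •
      ∑ p : A × (A →* ℂˣ), ((p.2 p.1 ^ s : ℂˣ) : ℂ) • tmulInlInr _ _ p := by
  rw [fourierTwist, Fintype.sum_prod_type]
  rfl

lemma sum_apply_mul_inv_apply_inv_mul (r : A × (A →* ℂˣ)) :
    ∑ p : A × (A →* ℂˣ), (p.2 p.1 : ℂ) * ((p⁻¹ * r).2 (p⁻¹ * r).1 : ℂ)⁻¹ =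
      (r.2 r.1 : ℂ)⁻¹ * ((∑ x, (r.2 x : ℂ)) * ∑ χ : A →* ℂˣ, (χ r.1 : ℂ)) := by
  obtain ⟨z, ψ⟩ := r
  simp only [Fintype.sum_prod_type, mul_sum, sum_mul]
  rw [sum_comm]
  refine sum_congr rfl fun x _ => sum_congr rfl fun χ _ => ?_
  simp only [Prod.inv_mk, Prod.mk_mul_mk, MonoidHom.mul_apply, MonoidHom.inv_apply, map_mul,
    map_inv, Units.val_mul, Units.val_inv_eq_inv_val]
  field_simp

lemma fourierTwist_mul_fourierTwist_neg_one : fourierTwist A 1 * fourierTwist A (-1) = 1 := by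
  have hA : (Fintype.card A : ℂ) ≠ 0 := Nat.cast_ne_zero.mpr Fintype.card_ne_zero
  rw [fourierTwist_eq_sum, fourierTwist_eq_sum, smul_mul_smul_comm, sum_mul_sum]
  simp only [smul_mul_smul_comm, ← map_mul]
  rw [sum_congr rfl fun p _ => (Equiv.sum_comp (Equiv.mulLeft p⁻¹) _).symm]
  simp only [Equiv.coe_mulLeft, mul_inv_cancel_left]
  rw [sum_comm]
  simp only [← sum_smul, zpow_one, zpow_neg_one, Units.val_inv_eq_inv_val,
    sum_apply_mul_inv_apply_inv_mul]
  rw [Fintype.sum_eq_single 1]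
  · simp only [Prod.fst_one, Prod.snd_one, MonoidHom.one_apply, Units.val_one, inv_one, map_one,
      one_mul, card_dual, sum_const, card_univ, nsmul_eq_mul, mul_one, smul_smul]
    rw [mul_mul_mul_comm, inv_mul_cancel₀ hA, one_mul, one_smul]
  · rintro ⟨z, ψ⟩ hr
    by_cases hψ : ψ = 1
    · have hz : z ≠ 1 := fun hz => hr (by rw [hz, hψ, Prod.mk_one_one])
      simp [sum_eval_eq_zero_of_ne_one hz]
    · simp [sum_apply_eq_zero_of_ne_one hψ]

lemma fourierTwist_neg_one_mul_fourierTwist : fourierTwist A (-1) * fourierTwist A 1 = 1 :=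
  (mul_comm _ _).trans fourierTwist_mul_fourierTwist_neg_one

lemma counitEq_fourierTwist : CounitEq (A × (A →* ℂˣ)) (fourierTwist A 1) := by
  have hA : (Fintype.card A : ℂ) ≠ 0 := Nat.cast_ne_zero.mpr Fintype.card_ne_zero
  constructor
  · simp only [fourierTwist, map_smul, map_sum, Algebra.TensorProduct.map_tmul, AlgHom.coe_id,
      id_eq, counit_of, Algebra.TensorProduct.lid_tmul, one_smul, zpow_one]
    rw [sum_comm]
    simp only [← sum_smul]
    rw [Fintype.sum_eq_single 1 fun χ hχ => by rw [sum_apply_eq_zero_of_ne_one hχ, zero_smul]]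
    simp [hA, MonoidAlgebra.one_def, Prod.mk_one_one]
  · simp only [fourierTwist, map_smul, map_sum, Algebra.TensorProduct.map_tmul, AlgHom.coe_id,
      id_eq, counit_of, Algebra.TensorProduct.rid_tmul, one_smul, zpow_one]
    simp only [← sum_smul]
    rw [Fintype.sum_eq_single 1 fun x hx => by rw [sum_eval_eq_zero_of_ne_one hx, zero_smul]]
    simp [hA, card_dual, MonoidAlgebra.one_def, Prod.mk_one_one]

lemma twistEq_fourierTwist (s : ℤ) : TwistEq (A × (A →* ℂˣ)) (fourierTwist A s) := by
  have h1 : (1 : MonoidAlgebra ℂ (A × (A →* ℂˣ))) = MonoidAlgebra.of ℂ _ (1, 1) := by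
    rw [Prod.mk_one_one, map_one]
  rw [TwistEq, fourierTwist_eq_sum, h1]
  simp only [map_smul, map_sum, tmulInlInr_apply, Algebra.TensorProduct.map_tmul, AlgHom.coe_id,
    id_eq, comul_of, Algebra.TensorProduct.assoc_tmul, sum_tmul, tmul_sum, ← smul_tmul', tmul_smul,
    smul_mul_smul_comm, sum_mul_sum, Algebra.TensorProduct.tmul_mul_tmul, ← map_mul,
    Prod.mk_mul_mk, one_mul, mul_one]
  congr 1
  rw [← Fintype.sum_prod_type', ← Fintype.sum_prod_type']
  -- The left-hand term `χ(x)^s ψ(y)^s (xy,1) ⊗ (x,ψ) ⊗ (1,χ)` is the right-hand term indexed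
  -- by `(xy, ψ), (x, ψ⁻¹χ)`.
  let e : (A × (A →* ℂˣ)) × (A × (A →* ℂˣ)) ≃ (A × (A →* ℂˣ)) × (A × (A →* ℂˣ)) :=
    { toFun r := ((r.1.1 * r.2.1, r.2.2), (r.1.1, r.2.2⁻¹ * r.1.2))
      invFun r := ((r.2.1, r.1.2 * r.2.2), (r.2.1⁻¹ * r.1.1, r.1.2))
      left_inv := by rintro ⟨⟨x, χ⟩, ⟨y, ψ⟩⟩; simp
      right_inv := by rintro ⟨⟨x, χ⟩, ⟨y, ψ⟩⟩; simp }
  refine Fintype.sum_equiv e _ _ fun ⟨⟨x, χ⟩, ⟨y, ψ⟩⟩ => ?_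
  simp only [e, Equiv.coe_fn_mk, mul_inv_cancel_left]
  rw [← Units.val_mul, ← Units.val_mul, ← mul_zpow, ← mul_zpow, MonoidHom.mul_apply,
    MonoidHom.inv_apply, map_mul, mul_mul_mul_comm, mul_inv_cancel, one_mul, mul_comm (χ x)]

lemma isTwist_fourierTwist : IsTwist (A × (A →* ℂˣ)) (fourierTwist A 1) :=
  ⟨.of_mul_eq_one _ fourierTwist_mul_fourierTwist_neg_one, twistEq_fourierTwist 1,
    counitEq_fourierTwist⟩

lemma map_transport_prodCongr_fourierTwist (σ : A ≃* A) (s : ℤ) :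
    TensorProduct.map
        (transport (A × (A →* ℂˣ)) (A × (A →* ℂˣ)) (σ.prodCongr σ.monoidHomCongrLeft))
        (transport (A × (A →* ℂˣ)) (A × (A →* ℂˣ)) (σ.prodCongr σ.monoidHomCongrLeft))
        (fourierTwist A s) =
      fourierTwist A s := by
  set τ : A × (A →* ℂˣ) ≃* A × (A →* ℂˣ) := σ.prodCongr σ.monoidHomCongrLeft
  have hτ : ∀ x χ, τ (x, χ) = (σ x, σ.monoidHomCongrLeft χ) := fun _ _ => rfl
  have hE : ∀ p, TensorProduct.map (transport _ _ τ) (transport _ _ τ) (tmulInlInr _ _ p) =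
      tmulInlInr _ _ (τ p) := fun ⟨x, χ⟩ => by
    simp only [tmulInlInr_apply, map_tmul, transport_of, hτ, map_one]
  have hpairing : ∀ p : A × (A →* ℂˣ), (τ p).2 (τ p).1 = p.2 p.1 := fun ⟨x, χ⟩ => by
    simp [hτ]
  rw [fourierTwist_eq_sum]
  simp only [map_smul, map_sum, hE]
  congr 1
  exact Fintype.sum_equiv τ.toEquiv _ _ fun p => by simp [hpairing]

end GroupAlgebra

theorem fourier_twist_isTwist_and_invariant_general
    (G A : Type*) [Group G] [CommGroup A] [Fintype A] [Fintype (A →* ℂˣ)]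
    (ρ : G →* MulAut A)
    (φt : G →* MulAut (A →* ℂˣ))
    (ρt : ((A →* ℂˣ) ⋊[φt] G) →* MulAut (A × (A →* ℂˣ)))
    (hρt : ∀ (χ : A →* ℂˣ) (g : G) (a : A) (ψ : A →* ℂˣ),
      ρt (⟨χ, g⟩ : (A →* ℂˣ) ⋊[φt] G) (a, ψ)
        = ((ρ g) a, ψ.comp ((ρ g)⁻¹ : A ≃* A).toMonoidHom)) :
    GroupAlgebra.IsTwist (A × (A →* ℂˣ)) (GroupAlgebra.fourierTwist A 1) ∧
    GroupAlgebra.MulEqOne (A × (A →* ℂˣ))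
      (GroupAlgebra.fourierTwist A 1) (GroupAlgebra.fourierTwist A (-1)) ∧
    GroupAlgebra.MulEqOne (A × (A →* ℂˣ))
      (GroupAlgebra.fourierTwist A (-1)) (GroupAlgebra.fourierTwist A 1) ∧
    ∀ gt : (A →* ℂˣ) ⋊[φt] G,
      TensorProduct.map
          (GroupAlgebra.transport (A × (A →* ℂˣ)) (A × (A →* ℂˣ)) ⇑(ρt gt))
          (GroupAlgebra.transport (A × (A →* ℂˣ)) (A × (A →* ℂˣ)) ⇑(ρt gt))
        (GroupAlgebra.fourierTwist A 1)
      = GroupAlgebra.fourierTwist A 1 := by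
  refine ⟨GroupAlgebra.isTwist_fourierTwist, GroupAlgebra.fourierTwist_mul_fourierTwist_neg_one,
    GroupAlgebra.fourierTwist_neg_one_mul_fourierTwist, fun gt => ?_⟩
  have hact : ⇑(ρt gt) = ⇑((ρ gt.right).prodCongr (ρ gt.right).monoidHomCongrLeft) :=
    funext fun ⟨a, ψ⟩ => hρt gt.left gt.right a ψ
  rw [hact]
  exact GroupAlgebra.map_transport_prodCongr_fourierTwist _ 1

/-- Let `A` be a finite abelian group with character group `A* = Hom(A, ℂˣ)`, `Ã = A × A*`, and
let `G̃ = G ⋉ A*` act on `Ã` by `(χ,g)·(a,ψ) = (ρ(g)(a), ψ ∘ ρ(g)⁻¹)`.  Then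
`J = |A|⁻¹ Σ_{x,χ} χ(x) (x,1) ⊗ (1,χ)` is a twist for `ℂ[Ã]` — in particular invertible with
inverse `|A|⁻¹ Σ_{x,χ} χ(x)⁻¹ (x,1) ⊗ (1,χ)` — and `J` is invariant under the action of `G̃`
(extended `ℂ`-linearly to both tensor factors). -/
theorem fourier_twist_isTwist_and_invariant
    (G A : Type*) [Group G] [CommGroup A] [Fintype A] [Fintype (A →* ℂˣ)]
    (ρ : G →* MulAut A)
    (φt : G →* MulAut (A →* ℂˣ))
    (hφt : ∀ (g : G) (χ : A →* ℂˣ) (a : A), (φt g χ) a = χ ((ρ g)⁻¹ a))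
    (ρt : ((A →* ℂˣ) ⋊[φt] G) →* MulAut (A × (A →* ℂˣ)))
    (hρt : ∀ (χ : A →* ℂˣ) (g : G) (a : A) (ψ : A →* ℂˣ),
      ρt (⟨χ, g⟩ : (A →* ℂˣ) ⋊[φt] G) (a, ψ)
        = ((ρ g) a, ψ.comp ((ρ g)⁻¹ : A ≃* A).toMonoidHom)) :
    GroupAlgebra.IsTwist (A × (A →* ℂˣ)) (GroupAlgebra.fourierTwist A 1) ∧
    GroupAlgebra.MulEqOne (A × (A →* ℂˣ))
      (GroupAlgebra.fourierTwist A 1) (GroupAlgebra.fourierTwist A (-1)) ∧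
    GroupAlgebra.MulEqOne (A × (A →* ℂˣ))
      (GroupAlgebra.fourierTwist A (-1)) (GroupAlgebra.fourierTwist A 1) ∧
    ∀ gt : (A →* ℂˣ) ⋊[φt] G,
      TensorProduct.map
          (GroupAlgebra.transport (A × (A →* ℂˣ)) (A × (A →* ℂˣ)) ⇑(ρt gt))
          (GroupAlgebra.transport (A × (A →* ℂˣ)) (A × (A →* ℂˣ)) ⇑(ρt gt))
        (GroupAlgebra.fourierTwist A 1)
      = GroupAlgebra.fourierTwist A 1 :=
  fourier_twist_isTwist_and_invariant_general G A ρ φt ρt hρt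
end
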